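/- arXiv:2605.16752 — 7 statements merged into one kernel-verified Lean document; each statement's English description precedes it below -/
import Mathlib

section
/- Let A ∈ ℝ^{n×n}, C ∈ ℝ^{p×n}, S ∈ ℝ^{q×p}, and let F ∈ ℝ^{N×N}, L ∈ ℝ^{N×p}, H ∈ ℝ^{p×N}, Π ∈ ℝ^{n×N} satisfy Π(F + LH) = AΠ and H = CΠ. If the pair (SC, A) is PBH-observable and the pair (H, F + LH) is PBH-detectable, then the pair (SH, F + LH) is PBH-detectable. -/
open Matrix

lemma map_mul_ofReal {a b c : ℕ} (M : Matrix (Fin a) (Fin b) ℝ)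
    (Nm : Matrix (Fin b) (Fin c) ℝ) :
    (M * Nm).map Complex.ofReal = M.map Complex.ofReal * Nm.map Complex.ofReal := by
  exact Matrix.map_mul (f := Complex.ofRealHom)

/-- If `(S*C, A)` is PBH-observable, `(H, F+LH)` is PBH-detectable, and
`Π (F + L H) = A Π`, `H = C Π`, then `(S*H, F+LH)` is PBH-detectable. -/
theorem canonical_realization_detectability
    (n p q N : ℕ)
    (A : Matrix (Fin n) (Fin n) ℝ) (C : Matrix (Fin p) (Fin n) ℝ)
    (S : Matrix (Fin q) (Fin p) ℝ)
    (F : Matrix (Fin N) (Fin N) ℝ) (L : Matrix (Fin N) (Fin p) ℝ)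
    (H : Matrix (Fin p) (Fin N) ℝ) (Pi' : Matrix (Fin n) (Fin N) ℝ)
    (hPiA : Pi' * (F + L * H) = A * Pi')
    (hH : H = C * Pi')
    (hobs : ∀ (lam : ℂ) (v : Fin n → ℂ), v ≠ 0 →
      (A.map Complex.ofReal).mulVec v = lam • v →
      ((S * C).map Complex.ofReal).mulVec v ≠ 0)
    (hdet : ∀ (lam : ℂ) (v : Fin N → ℂ), 0 ≤ lam.re → v ≠ 0 →
      ((F + L * H).map Complex.ofReal).mulVec v = lam • v →
      (H.map Complex.ofReal).mulVec v ≠ 0) :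
    ∀ (lam : ℂ) (v : Fin N → ℂ), 0 ≤ lam.re → v ≠ 0 →
      ((F + L * H).map Complex.ofReal).mulVec v = lam • v →
      ((S * H).map Complex.ofReal).mulVec v ≠ 0 := by
  intro lam v hre hv heig
  set w : Fin n → ℂ := (Pi'.map Complex.ofReal).mulVec v with hw
  have hAw : (A.map Complex.ofReal).mulVec w = lam • w := by
    have h1 : ((Pi' * (F + L * H)).map Complex.ofReal).mulVec v
        = ((A * Pi').map Complex.ofReal).mulVec v := by rw [hPiA]
    rw [map_mul_ofReal, map_mul_ofReal, ← Matrix.mulVec_mulVec,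
      ← Matrix.mulVec_mulVec, heig, Matrix.mulVec_smul] at h1
    simpa [hw] using h1.symm
  have hwne : w ≠ 0 := by
    intro h0
    apply hdet lam v hre hv heig
    rw [hH, map_mul_ofReal, ← Matrix.mulVec_mulVec, ← hw, h0, Matrix.mulVec_zero]
  have := hobs lam w hwne hAw
  rw [map_mul_ofReal, ← Matrix.mulVec_mulVec] at this
  simpa [hH, map_mul_ofReal, ← Matrix.mulVec_mulVec, ← hw] using this
end

section
/- Let A ∈ ℝ^{n×n}, B ∈ ℝ^{n×m}, C ∈ ℝ^{p×n}, Q ∈ ℝ^{p×p}, and let R ∈ ℝ^{m×m} be invertible. Let F ∈ ℝ^{N×N}, L ∈ ℝ^{N×p}, G ∈ ℝ^{N×m}, H ∈ ℝ^{p×N}, Π ∈ ℝ^{n×N} satisfy Π(F + LH) = AΠ, ΠG = B, and H = CΠ. If P ∈ ℝ^{n×n} solves the algebraic Riccati equation AᵀP + PA − PBR⁻¹BᵀP + CᵀQC = 0, then P_η := ΠᵀPΠ solves (F + LH)ᵀP_η + P_η(F + LH) − P_η G R⁻¹ Gᵀ P_η + HᵀQH = 0, and moreover the associated gains satisfy R⁻¹GᵀP_η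 = (R⁻¹BᵀP)Π. -/
open Matrix

/-- If `P` solves the ARE for `(A,B,C,Q,R)` and `(F+LH, G, H)` is a
realization with `Π(F+LH) = AΠ`, `ΠG = B`, `H = CΠ`, then `P_η = ΠᵀPΠ` solves the
corresponding ARE, and `R⁻¹GᵀP_η = (R⁻¹BᵀP)Π`. -/
theorem riccati_pullback
    (n m p N : ℕ)
    (A : Matrix (Fin n) (Fin n) ℝ) (B : Matrix (Fin n) (Fin m) ℝ)
    (C : Matrix (Fin p) (Fin n) ℝ) (Q : Matrix (Fin p) (Fin p) ℝ)
    (R : Matrix (Fin m) (Fin m) ℝ) (hR : IsUnit R.det)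
    (F : Matrix (Fin N) (Fin N) ℝ) (L : Matrix (Fin N) (Fin p) ℝ)
    (G : Matrix (Fin N) (Fin m) ℝ) (H : Matrix (Fin p) (Fin N) ℝ)
    (Pi' : Matrix (Fin n) (Fin N) ℝ)
    (hPiA : Pi' * (F + L * H) = A * Pi')
    (hPiG : Pi' * G = B)
    (hH : H = C * Pi')
    (P : Matrix (Fin n) (Fin n) ℝ)
    (hARE : Aᵀ * P + P * A - P * B * R⁻¹ * Bᵀ * P + Cᵀ * Q * C = 0) :
    (F + L * H)ᵀ * (Pi'ᵀ * P * Pi') + (Pi'ᵀ * P * Pi') * (F + L * H)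
      - (Pi'ᵀ * P * Pi') * G * R⁻¹ * Gᵀ * (Pi'ᵀ * P * Pi') + Hᵀ * Q * H = 0
    ∧ R⁻¹ * Gᵀ * (Pi'ᵀ * P * Pi') = (R⁻¹ * Bᵀ * P) * Pi' := by
  have h1 : (F + L * H)ᵀ * Pi'ᵀ = Pi'ᵀ * Aᵀ := by
    rw [← Matrix.transpose_mul, hPiA, Matrix.transpose_mul]
  have h2 : Gᵀ * Pi'ᵀ = Bᵀ := by
    rw [← Matrix.transpose_mul, hPiG]
  have key : Pi'ᵀ * (Aᵀ * P + P * A - P * B * R⁻¹ * Bᵀ * P + Cᵀ * Q * C) * Pi' = 0 := by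
    rw [hARE]; simp
  have e1 : (F + L * H)ᵀ * (Pi'ᵀ * P * Pi') = Pi'ᵀ * (Aᵀ * (P * Pi')) := by
    calc (F + L * H)ᵀ * (Pi'ᵀ * P * Pi') = ((F + L * H)ᵀ * Pi'ᵀ) * P * Pi' := by
          simp [Matrix.mul_assoc]
      _ = Pi'ᵀ * Aᵀ * P * Pi' := by rw [h1]
      _ = _ := by simp [Matrix.mul_assoc]
  have e2 : (Pi'ᵀ * P * Pi') * (F + L * H) = Pi'ᵀ * (P * (A * Pi')) := by
    calc (Pi'ᵀ * P * Pi') * (F + L * H) = Pi'ᵀ * P * (Pi' * (F + L * H)) := by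
          simp [Matrix.mul_assoc]
      _ = Pi'ᵀ * P * (A * Pi') := by rw [hPiA]
      _ = _ := by simp [Matrix.mul_assoc]
  have e3 : (Pi'ᵀ * P * Pi') * G * R⁻¹ * Gᵀ * (Pi'ᵀ * P * Pi')
      = Pi'ᵀ * (P * (B * (R⁻¹ * (Bᵀ * (P * Pi'))))) := by
    calc (Pi'ᵀ * P * Pi') * G * R⁻¹ * Gᵀ * (Pi'ᵀ * P * Pi')
        = Pi'ᵀ * P * (Pi' * G) * R⁻¹ * (Gᵀ * Pi'ᵀ) * P * Pi' := by
          simp [Matrix.mul_assoc]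
      _ = Pi'ᵀ * P * B * R⁻¹ * Bᵀ * P * Pi' := by rw [hPiG, h2]
      _ = _ := by simp [Matrix.mul_assoc]
  have e4 : Hᵀ * Q * H = Pi'ᵀ * (Cᵀ * (Q * (C * Pi'))) := by
    rw [hH]; simp [Matrix.mul_assoc]
  constructor
  · rw [e1, e2, e3, e4]
    simp only [Matrix.mul_add, Matrix.add_mul, Matrix.mul_sub, Matrix.sub_mul,
      Matrix.mul_assoc] at key
    convert key using 2
  · calc R⁻¹ * Gᵀ * (Pi'ᵀ * P * Pi')
        = R⁻¹ * (Gᵀ * Pi'ᵀ) * P * Pi' := by simp [Matrix.mul_assoc]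
      _ = _ := by rw [h2]
end

section
/- Let A ∈ ℝ^{n×n}, B ∈ ℝ^{n×m}, C ∈ ℝ^{p×n}, and let F ∈ ℝ^{N×N}, L ∈ ℝ^{N×p}, G ∈ ℝ^{N×m}, H ∈ ℝ^{p×N}, Π ∈ ℝ^{n×N} satisfy Π(F + LH) = AΠ, ΠG = B, and H = CΠ. Let u : ℝ → ℝᵐ, and let x : ℝ → ℝⁿ and η : ℝ → ℝᴺ be differentiable functions satisfying x'(t) = A x(t) + B u(t) and η'(t) = (F + LH) η(t) + G u(t) for all t ≥ 0. If Π η(0) = x(0), then Π η(t) = x(t) for all t ≥ 0, and consequently the output trajectories coincide: C x(t) = H η(t) for all t ≥ 0. -/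
open Matrix Set

/-- If `(F+LH, G, H)` is a realization of `(A, B, C)` intertwined by `Π`,
and the state trajectories of the plant and the realization satisfy the respective linear
ODEs with matched initial conditions `Π η(0) = x(0)`, then `Π η(t) = x(t)` for all `t ≥ 0`,
and the output trajectories coincide. -/
theorem realization_state_matching
    (n m p N : ℕ)
    (A : Matrix (Fin n) (Fin n) ℝ) (B : Matrix (Fin n) (Fin m) ℝ)
    (C : Matrix (Fin p) (Fin n) ℝ)
    (F : Matrix (Fin N) (Fin N) ℝ) (L : Matrix (Fin N) (Fin p) ℝ)
    (G : Matrix (Fin N) (Fin m) ℝ) (H : Matrix (Fin p) (Fin N) ℝ)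
    (Pi' : Matrix (Fin n) (Fin N) ℝ)
    (hPiA : Pi' * (F + L * H) = A * Pi')
    (hPiG : Pi' * G = B)
    (hH : H = C * Pi')
    (u : ℝ → Fin m → ℝ) (x : ℝ → Fin n → ℝ) (η : ℝ → Fin N → ℝ)
    (hx : ∀ t : ℝ, 0 ≤ t → HasDerivAt x (A.mulVec (x t) + B.mulVec (u t)) t)
    (hη : ∀ t : ℝ, 0 ≤ t →
      HasDerivAt η ((F + L * H).mulVec (η t) + G.mulVec (u t)) t)
    (h0 : Pi'.mulVec (η 0) = x 0) :
    ∀ t : ℝ, 0 ≤ t →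
      Pi'.mulVec (η t) = x t ∧ C.mulVec (x t) = H.mulVec (η t) := by
  -- continuous linear maps for matrix action
  set TA := LinearMap.toContinuousLinearMap (Matrix.mulVecLin A) with hTA
  set TP := LinearMap.toContinuousLinearMap (Matrix.mulVecLin Pi') with hTP
  set v : ℝ → (Fin n → ℝ) → (Fin n → ℝ) :=
    fun t y => A.mulVec y + B.mulVec (u t) with hv
  have hvlip : ∀ t, LipschitzWith ‖TA‖₊ (v t) := by
    intro t
    rw [lipschitzWith_iff_dist_le_mul]
    intro y z
    have := TA.lipschitz.dist_le_mul y z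
    simpa [hv, hTA, dist_add_right] using this
  -- derivative of Π η
  have hf' : ∀ t : ℝ, 0 ≤ t →
      HasDerivAt (fun s => Pi'.mulVec (η s)) (v t (Pi'.mulVec (η t))) t := by
    intro t ht
    have hc := TP.hasFDerivAt.comp_hasDerivAt t (hη t ht)
    have heq : TP ((F + L * H).mulVec (η t) + G.mulVec (u t))
        = v t (Pi'.mulVec (η t)) := by
      simp only [hTP, hv, LinearMap.coe_toContinuousLinearMap', Matrix.mulVecLin_apply,
        Matrix.mulVec_add, Matrix.mulVec_mulVec, hPiA, hPiG]
    rw [heq] at hc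
    exact hc
  have key : ∀ t : ℝ, 0 ≤ t → Pi'.mulVec (η t) = x t := by
    intro b hb
    have := ODE_solution_unique (v := v) (f := fun s => Pi'.mulVec (η s)) (g := x)
      (a := 0) (b := b) hvlip
      (fun t ht => ((hf' t ht.1).continuousAt).continuousWithinAt)
      (fun t ht => (hf' t ht.1).hasDerivWithinAt)
      (fun t ht => ((hx t ht.1).continuousAt).continuousWithinAt)
      (fun t ht => (hx t ht.1).hasDerivWithinAt)
      h0
    exact this ⟨hb, le_rfl⟩
  intro t ht
  refine ⟨key t ht, ?_⟩
  rw [← key t ht, hH, ← Matrix.mulVec_mulVec]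
end

section
/- Let A ∈ ℝ^{n×n}, B ∈ ℝ^{n×m}, C ∈ ℝ^{p×n}, and let A_z ∈ ℝ^{N×N}, B_ξ ∈ ℝ^{N×m}, L_z ∈ ℝ^{N×p}, Π ∈ ℝ^{n×N} satisfy Π(A_z + L_z C Π) = AΠ and Π B_ξ = B. Let u : ℝ → ℝᵐ, and let x : ℝ → ℝⁿ and z : ℝ → ℝᴺ be differentiable with x'(t) = A x(t) + B u(t) and z'(t) = A_z z(t) + B_ξ u(t) + L_z C x(t) for all t ≥ 0. Then the error e(t) := x(t) − Π z(t) satisfies e'(t) = (A − Π L_z C) e(t) for all t ≥ 0, hence e(t) = exp(t(A − Π L_z C)) e(0), and the plant output decomposes as C x(t) = C Π z(t) + C e(t). -/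
open Matrix NormedSpace

noncomputable def matCLM (n : ℕ) (M : Matrix (Fin n) (Fin n) ℝ) :
    (Fin n → ℝ) →L[ℝ] (Fin n → ℝ) :=
  LinearMap.toContinuousLinearMap M.mulVecLin

noncomputable def matAlgHom (n : ℕ) :
    Matrix (Fin n) (Fin n) ℝ →ₐ[ℝ] ((Fin n → ℝ) →L[ℝ] (Fin n → ℝ)) where
  toFun := matCLM n
  map_one' := by ext v i; simp [matCLM]
  map_mul' M₁ M₂ := by ext v i; simp [matCLM, Matrix.mulVec_mulVec]
  map_zero' := by ext v i; simp [matCLM]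
  map_add' M₁ M₂ := by ext v i; simp [matCLM, Matrix.add_mulVec]
  commutes' r := by
    ext v i
    simp [matCLM, Matrix.algebraMap_eq_diagonal, Matrix.mulVec_diagonal,
      Pi.algebraMap_apply, Algebra.algebraMap_self, RingHom.id_apply,
      ContinuousLinearMap.algebraMap_apply]

theorem matAlgHom_exp (n : ℕ) (M : Matrix (Fin n) (Fin n) ℝ) :
    matAlgHom n (exp M) = exp (matAlgHom n M) := by
  letI : SeminormedRing (Matrix (Fin n) (Fin n) ℝ) := Matrix.linftyOpSemiNormedRing
  letI : NormedRing (Matrix (Fin n) (Fin n) ℝ) := Matrix.linftyOpNormedRing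
  letI : NormedAlgebra ℝ (Matrix (Fin n) (Fin n) ℝ) := Matrix.linftyOpNormedAlgebra
  letI : NormedAlgebra ℚ (Matrix (Fin n) (Fin n) ℝ) := .restrictScalars ℚ ℝ _
  exact map_exp (matAlgHom n) (LinearMap.continuous_of_finiteDimensional
    (matAlgHom n).toLinearMap) M

/-- Observer error dynamics for the filter: with `Π(A_z + L_z C Π) = AΠ`
and `Π B_ξ = B`, the error `e = x − Π z` satisfies `e' = (A − Π L_z C) e`, hence
`e(t) = exp(t(A − Π L_z C)) e(0)`, and `C x = C Π z + C e`. -/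
theorem filter_error_dynamics
    (n m p N : ℕ)
    (A : Matrix (Fin n) (Fin n) ℝ) (B : Matrix (Fin n) (Fin m) ℝ)
    (C : Matrix (Fin p) (Fin n) ℝ)
    (Az : Matrix (Fin N) (Fin N) ℝ) (Bξ : Matrix (Fin N) (Fin m) ℝ)
    (Lz : Matrix (Fin N) (Fin p) ℝ) (Pi' : Matrix (Fin n) (Fin N) ℝ)
    (hPiA : Pi' * (Az + Lz * (C * Pi')) = A * Pi')
    (hPiB : Pi' * Bξ = B)
    (u : ℝ → Fin m → ℝ) (x : ℝ → Fin n → ℝ) (z : ℝ → Fin N → ℝ)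
    (hx : ∀ t : ℝ, 0 ≤ t → HasDerivAt x (A.mulVec (x t) + B.mulVec (u t)) t)
    (hz : ∀ t : ℝ, 0 ≤ t → HasDerivAt z
      (Az.mulVec (z t) + Bξ.mulVec (u t) + Lz.mulVec (C.mulVec (x t))) t) :
    (∀ t : ℝ, 0 ≤ t → HasDerivAt (fun s => x s - Pi'.mulVec (z s))
        ((A - Pi' * Lz * C).mulVec (x t - Pi'.mulVec (z t))) t)
    ∧ (∀ t : ℝ, 0 ≤ t → x t - Pi'.mulVec (z t)
        = (exp (t • (A - Pi' * Lz * C))).mulVec (x 0 - Pi'.mulVec (z 0)))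
    ∧ (∀ t : ℝ, 0 ≤ t → C.mulVec (x t)
        = (C * Pi').mulVec (z t) + C.mulVec (x t - Pi'.mulVec (z t))) := by
  set M : Matrix (Fin n) (Fin n) ℝ := A - Pi' * Lz * C with hM
  set e : ℝ → Fin n → ℝ := fun s => x s - Pi'.mulVec (z s) with he
  -- the key algebraic identity
  have key : ∀ (v : Fin n → ℝ) (w : Fin N → ℝ) (uu : Fin m → ℝ),
      (A.mulVec v + B.mulVec uu)
        - Pi'.mulVec (Az.mulVec w + Bξ.mulVec uu + Lz.mulVec (C.mulVec v))
        = M.mulVec (v - Pi'.mulVec w) := by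
    intro v w uu
    have hAz : Pi' * Az = A * Pi' - Pi' * (Lz * (C * Pi')) := by
      rw [← hPiA, Matrix.mul_add]; abel
    simp only [Matrix.mulVec_add, Matrix.mulVec_mulVec]
    rw [hPiB, hAz, hM]
    simp only [Matrix.sub_mulVec, Matrix.mulVec_sub, Matrix.sub_mul,
      Matrix.mulVec_mulVec, ← Matrix.mul_assoc]
    abel
  -- part 1
  have hder : ∀ t : ℝ, 0 ≤ t → HasDerivAt e (M.mulVec (e t)) t := by
    intro t ht
    have hc := (LinearMap.toContinuousLinearMap
        Pi'.mulVecLin).hasFDerivAt.comp_hasDerivAt t (hz t ht)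
    have h1 : HasDerivAt e
        ((A.mulVec (x t) + B.mulVec (u t))
          - Pi'.mulVec (Az.mulVec (z t) + Bξ.mulVec (u t) + Lz.mulVec (C.mulVec (x t)))) t := by
      simpa [he, Function.comp_def, Pi.sub_def] using (hx t ht).sub hc
    exact key (x t) (z t) (u t) ▸ h1
  refine ⟨hder, ?_, ?_⟩
  · -- part 2
    intro t ht
    set L : (Fin n → ℝ) →L[ℝ] (Fin n → ℝ) := matCLM n M with hL
    set g : ℝ → Fin n → ℝ := fun s => (exp ((-s) • L)) (e s) with hgdef
    have hg : ∀ s : ℝ, 0 ≤ s → HasDerivAt g 0 s := by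
      intro s hs
      have hc : HasDerivAt (fun r : ℝ => exp ((-r) • L))
          ((-1 : ℝ) • (exp ((-s) • L) * L)) s :=
        (hasDerivAt_exp_smul_const L (-s)).scomp s (hasDerivAt_neg s)
      have he' : HasDerivAt e (L (e s)) s := hder s hs
      have := hc.clm_apply he'
      simpa [ContinuousLinearMap.mul_apply] using this
    have hconst : g t = g 0 := by
      have hcont : ContinuousOn g (Set.Icc 0 t) := fun s hs =>
        ((hg s hs.1).continuousAt).continuousWithinAt
      have hdz : ∀ s ∈ Set.Ico 0 t, HasDerivWithinAt g 0 (Set.Ici s) s := fun s hs =>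
        (hg s hs.1).hasDerivWithinAt
      exact constant_of_has_deriv_right_zero hcont hdz t (Set.right_mem_Icc.2 ht)
    have hg0 : g 0 = e 0 := by simp [hgdef]
    have hinv : exp (t • L) * exp ((-t) • L) = 1 := by
      letI : NormedAlgebra ℚ ((Fin n → ℝ) →L[ℝ] (Fin n → ℝ)) := .restrictScalars ℚ ℝ _
      rw [← NormedSpace.exp_add_of_commute (((Commute.refl L).smul_left t).smul_right (-t))]
      rw [← add_smul]
      simp
    have het : e t = (exp (t • L)) (e 0) := by
      calc e t = (exp (t • L) * exp ((-t) • L)) (e t) := by rw [hinv]; simp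
        _ = (exp (t • L)) (g t) := by rw [ContinuousLinearMap.mul_apply]
        _ = (exp (t • L)) (e 0) := by rw [hconst, hg0]
    have hmap : matAlgHom n (exp (t • M)) = exp (t • L) := by
      rw [matAlgHom_exp, _root_.map_smul]
      rfl
    have : (exp (t • M)).mulVec (e 0) = (matAlgHom n (exp (t • M))) (e 0) := rfl
    rw [show x t - Pi'.mulVec (z t) = e t from rfl, het,
      show x 0 - Pi'.mulVec (z 0) = e 0 from rfl, this, hmap]
  · -- part 3
    intro t ht
    simp only [Matrix.mulVec_sub, Matrix.mulVec_mulVec]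
    abel
end

section
/- Let A_ξ ∈ ℝ^{N×N}, Â ∈ ℝ^{N×n}, Λ ∈ ℝ^{n×n}, B_ξ ∈ ℝ^{N×m}, C_ξ ∈ ℝ^{p×N}, Ĉ ∈ ℝ^{p×n}, Q ∈ ℝ^{p×p}, and let R ∈ ℝ^{m×m} be invertible. Form A_ζ := [[A_ξ, Â], [0, Λ]], B_ζ := [[B_ξ], [0]], C_ζ := [C_ξ, Ĉ]. Suppose the block matrix P_ζ = [[P₁₁, P₁₂], [P₂₁, P₂₂]] (with P₁₁ ∈ ℝ^{N×N}) solves A_ζᵀ P_ζ + P_ζ A_ζ − P_ζ B_ζ R⁻¹ B_ζᵀ P_ζ + C_ζᵀ Q C_ζ = 0. Then the (1,1) block satisfies A_ξᵀ P₁₁ + P₁₁ A_ξ − P₁₁ B_ξ R⁻¹ B_ξᵀ P₁₁ + C_ξᵀ Q C_ξ = 0, and the gain K_ζ := R⁻¹ B_ζᵀ P_ζ has block form K_ζ = [R⁻¹ B_ξᵀ P₁₁, R⁻¹ B_ξᵀ P₁₂]. -/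
open Matrix

/-- If `P_ζ = [[P₁₁, P₁₂],[P₂₁, P₂₂]]` solves the ARE for the block
system `(A_ζ, B_ζ, C_ζ)` with `A_ζ = [[A_ξ, Â],[0, Λ]]`, `B_ζ = [[B_ξ],[0]]`,
`C_ζ = [C_ξ, Ĉ]`, then the `(1,1)` block `P₁₁` solves the ARE for `(A_ξ, B_ξ, C_ξ)`,
and the gain `R⁻¹ B_ζᵀ P_ζ` has block form `[R⁻¹ B_ξᵀ P₁₁, R⁻¹ B_ξᵀ P₁₂]`. -/
theorem block_riccati
    (N n m p : ℕ)
    (Aξ : Matrix (Fin N) (Fin N) ℝ) (Ahat : Matrix (Fin N) (Fin n) ℝ)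
    (Λ : Matrix (Fin n) (Fin n) ℝ) (Bξ : Matrix (Fin N) (Fin m) ℝ)
    (Cξ : Matrix (Fin p) (Fin N) ℝ) (Chat : Matrix (Fin p) (Fin n) ℝ)
    (Q : Matrix (Fin p) (Fin p) ℝ)
    (R : Matrix (Fin m) (Fin m) ℝ) (hR : IsUnit R.det)
    (P₁₁ : Matrix (Fin N) (Fin N) ℝ) (P₁₂ : Matrix (Fin N) (Fin n) ℝ)
    (P₂₁ : Matrix (Fin n) (Fin N) ℝ) (P₂₂ : Matrix (Fin n) (Fin n) ℝ)
    (hARE :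
      (Matrix.fromBlocks Aξ Ahat 0 Λ)ᵀ * Matrix.fromBlocks P₁₁ P₁₂ P₂₁ P₂₂
        + Matrix.fromBlocks P₁₁ P₁₂ P₂₁ P₂₂ * Matrix.fromBlocks Aξ Ahat 0 Λ
        - Matrix.fromBlocks P₁₁ P₁₂ P₂₁ P₂₂
            * Matrix.fromRows Bξ (0 : Matrix (Fin n) (Fin m) ℝ) * R⁻¹
            * (Matrix.fromRows Bξ (0 : Matrix (Fin n) (Fin m) ℝ))ᵀ
            * Matrix.fromBlocks P₁₁ P₁₂ P₂₁ P₂₂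
        + (Matrix.fromCols Cξ Chat)ᵀ * Q * Matrix.fromCols Cξ Chat = 0) :
    Aξᵀ * P₁₁ + P₁₁ * Aξ - P₁₁ * Bξ * R⁻¹ * Bξᵀ * P₁₁ + Cξᵀ * Q * Cξ = 0
    ∧ R⁻¹ * (Matrix.fromRows Bξ (0 : Matrix (Fin n) (Fin m) ℝ))ᵀ
          * Matrix.fromBlocks P₁₁ P₁₂ P₂₁ P₂₂
        = Matrix.fromCols (R⁻¹ * Bξᵀ * P₁₁) (R⁻¹ * Bξᵀ * P₁₂) := by
  constructor
  · have h := congrArg Matrix.toBlocks₁₁ hARE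
    simp [Matrix.fromBlocks_transpose, Matrix.transpose_fromRows,
      Matrix.transpose_fromCols, Matrix.fromBlocks_mul_fromRows,
      Matrix.fromCols_mul_fromBlocks, Matrix.fromRows_mul_fromCols,
      Matrix.fromCols_mul_fromRows, Matrix.fromBlocks_multiply,
      Matrix.toBlocks₁₁, Matrix.fromBlocks_add, Matrix.mul_fromCols,
      Matrix.fromRows_mul, Matrix.mul_assoc] at h
    simp only [Matrix.mul_assoc]
    ext i j
    exact congrFun (congrFun h i) j
  · rw [Matrix.transpose_fromRows, Matrix.mul_assoc, Matrix.fromCols_mul_fromBlocks,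
      Matrix.mul_fromCols]
    simp [Matrix.mul_assoc]
end

section
/- Let F ∈ ℝ^{N×N}, G ∈ ℝ^{N×m}, H ∈ ℝ^{p×N}, Q ∈ ℝ^{p×p} symmetric, R ∈ ℝ^{m×m} symmetric and invertible, and suppose P ∈ ℝ^{N×N} is symmetric and solves Fᵀ P + P F − P G R⁻¹ Gᵀ P + Hᵀ Q H = 0. Let u : ℝ → ℝᵐ be continuous and let η : ℝ → ℝᴺ be differentiable with η'(t) = F η(t) + G u(t) for all t, and set y(t) := H η(t). Then for every T ≥ 0: ∫₀ᵀ ( y(t)ᵀ Q y(t) + u(t)ᵀ R u(t) ) dt = η(0)ᵀ P η(0) − η(T)ᵀ P η(T) + ∫₀ᵀ ( u(t) + R⁻¹ Gᵀ P η(t) )ᵀ R ( u(t) + R⁻¹ Gᵀ P η(t) ) dt. -/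
open Matrix

lemma mulVec_dot' {n n' : ℕ} (A : Matrix (Fin n) (Fin n') ℝ) (a : Fin n' → ℝ) (b : Fin n → ℝ) :
    A.mulVec a ⬝ᵥ b = a ⬝ᵥ Aᵀ.mulVec b := by
  rw [dotProduct_mulVec, vecMul_transpose, dotProduct_comm]

lemma hd_dot' {n : ℕ} {f g : ℝ → Fin n → ℝ} {f' g' : Fin n → ℝ} {t : ℝ}
    (hf : HasDerivAt f f' t) (hg : HasDerivAt g g' t) :
    HasDerivAt (fun t => f t ⬝ᵥ g t) (f' ⬝ᵥ g t + f t ⬝ᵥ g') t := by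
  have h : (f' ⬝ᵥ g t + f t ⬝ᵥ g') = ∑ i, (f' i * g t i + f t i * g' i) := by
    simp [dotProduct, Finset.sum_add_distrib]
  rw [h]
  exact HasDerivAt.fun_sum fun i _ =>
    ((hasDerivAt_pi.mp hf i).mul (hasDerivAt_pi.mp hg i))

lemma hd_mulVec' {n n' : ℕ} (A : Matrix (Fin n) (Fin n') ℝ) {f : ℝ → Fin n' → ℝ}
    {f' : Fin n' → ℝ} {t : ℝ} (hf : HasDerivAt f f' t) :
    HasDerivAt (fun t => A.mulVec (f t)) (A.mulVec f') t := by
  rw [hasDerivAt_pi]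
  intro i
  have : A.mulVec f' i = ∑ j, A i j * f' j := rfl
  rw [this]
  simpa [Matrix.mulVec, dotProduct] using
    HasDerivAt.fun_sum (u := Finset.univ) fun j _ => (hasDerivAt_pi.mp hf j).const_mul (A i j)

/-- Completion-of-squares identity: if `P` solves the ARE
`FᵀP + PF − PGR⁻¹GᵀP + HᵀQH = 0`, then along any trajectory of `η' = Fη + Gu` with
output `y = Hη`, for every `T ≥ 0`,
`∫₀ᵀ (yᵀQy + uᵀRu) = η(0)ᵀPη(0) − η(T)ᵀPη(T) + ∫₀ᵀ (u + R⁻¹GᵀPη)ᵀR(u + R⁻¹GᵀPη)`. -/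
theorem completion_of_squares
    (N m p : ℕ)
    (F : Matrix (Fin N) (Fin N) ℝ) (G : Matrix (Fin N) (Fin m) ℝ)
    (H : Matrix (Fin p) (Fin N) ℝ)
    (Q : Matrix (Fin p) (Fin p) ℝ) (hQ : Q.IsSymm)
    (R : Matrix (Fin m) (Fin m) ℝ) (hRsymm : R.IsSymm) (hR : IsUnit R.det)
    (P : Matrix (Fin N) (Fin N) ℝ) (hP : P.IsSymm)
    (hARE : Fᵀ * P + P * F - P * G * R⁻¹ * Gᵀ * P + Hᵀ * Q * H = 0)
    (u : ℝ → Fin m → ℝ) (hu : Continuous u)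
    (η : ℝ → Fin N → ℝ)
    (hη : ∀ t : ℝ, HasDerivAt η (F.mulVec (η t) + G.mulVec (u t)) t) :
    ∀ Tf : ℝ, 0 ≤ Tf →
      (∫ t in (0:ℝ)..Tf,
          (H.mulVec (η t) ⬝ᵥ Q.mulVec (H.mulVec (η t)) + u t ⬝ᵥ R.mulVec (u t)))
        = η 0 ⬝ᵥ P.mulVec (η 0) - η Tf ⬝ᵥ P.mulVec (η Tf)
          + ∫ t in (0:ℝ)..Tf,
              ((u t + (R⁻¹ * Gᵀ * P).mulVec (η t))
                ⬝ᵥ R.mulVec (u t + (R⁻¹ * Gᵀ * P).mulVec (η t))) := by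
  -- basic matrix facts
  have hRR : R * R⁻¹ = 1 := Matrix.mul_nonsing_inv R hR
  have hRS : R * (R⁻¹ * Gᵀ * P) = Gᵀ * P := by
    rw [← Matrix.mul_assoc, ← Matrix.mul_assoc, hRR, Matrix.one_mul]
  have hSR : (R⁻¹ * Gᵀ * P)ᵀ * R = P * G := by
    calc (R⁻¹ * Gᵀ * P)ᵀ * R = (R⁻¹ * Gᵀ * P)ᵀ * Rᵀ := by rw [hRsymm.eq]
    _ = (R * (R⁻¹ * Gᵀ * P))ᵀ := (Matrix.transpose_mul R _).symm
    _ = (Gᵀ * P)ᵀ := by rw [hRS]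
    _ = P * G := by rw [Matrix.transpose_mul, hP.eq, Matrix.transpose_transpose]
  have hassoc : P * G * (R⁻¹ * Gᵀ * P) = P * G * R⁻¹ * Gᵀ * P := by
    simp [Matrix.mul_assoc]
  have hSS : (R⁻¹ * Gᵀ * P)ᵀ * (Gᵀ * P) = P * G * R⁻¹ * Gᵀ * P := by
    rw [← hRS, ← Matrix.mul_assoc, hSR, hassoc]
  -- ARE applied to a vector
  have hAREx : ∀ x : Fin N → ℝ,
      x ⬝ᵥ (Hᵀ * Q * H).mulVec x
        = -(x ⬝ᵥ (Fᵀ * P).mulVec x) - x ⬝ᵥ (P * F).mulVec x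
          + x ⬝ᵥ (P * G * R⁻¹ * Gᵀ * P).mulVec x := by
    intro x
    have h0 := congrArg (fun M : Matrix (Fin N) (Fin N) ℝ => x ⬝ᵥ M.mulVec x) hARE
    simp only [Matrix.add_mulVec, Matrix.sub_mulVec, dotProduct_add, dotProduct_sub,
      Matrix.zero_mulVec, dotProduct_zero] at h0
    linarith
  -- pointwise completion-of-squares identity
  have key : ∀ t : ℝ,
      H.mulVec (η t) ⬝ᵥ Q.mulVec (H.mulVec (η t)) + u t ⬝ᵥ R.mulVec (u t)
        = -((F.mulVec (η t) + G.mulVec (u t)) ⬝ᵥ P.mulVec (η t)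
              + η t ⬝ᵥ P.mulVec (F.mulVec (η t) + G.mulVec (u t)))
          + (u t + (R⁻¹ * Gᵀ * P).mulVec (η t))
              ⬝ᵥ R.mulVec (u t + (R⁻¹ * Gᵀ * P).mulVec (η t)) := by
    intro t
    set x := η t
    set v := u t
    have e1 : H.mulVec x ⬝ᵥ Q.mulVec (H.mulVec x) = x ⬝ᵥ (Hᵀ * Q * H).mulVec x := by
      rw [mulVec_dot', Matrix.mulVec_mulVec, Matrix.mulVec_mulVec]
    have e2 : (F.mulVec x + G.mulVec v) ⬝ᵥ P.mulVec x
        = x ⬝ᵥ (Fᵀ * P).mulVec x + v ⬝ᵥ (Gᵀ * P).mulVec x := by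
      rw [add_dotProduct, mulVec_dot', mulVec_dot', Matrix.mulVec_mulVec,
        Matrix.mulVec_mulVec]
    have e3 : x ⬝ᵥ P.mulVec (F.mulVec x + G.mulVec v)
        = x ⬝ᵥ (P * F).mulVec x + x ⬝ᵥ (P * G).mulVec v := by
      rw [Matrix.mulVec_add, dotProduct_add, Matrix.mulVec_mulVec, Matrix.mulVec_mulVec]
    have e4 : (v + (R⁻¹ * Gᵀ * P).mulVec x) ⬝ᵥ R.mulVec (v + (R⁻¹ * Gᵀ * P).mulVec x)
        = v ⬝ᵥ R.mulVec v + v ⬝ᵥ (Gᵀ * P).mulVec x + x ⬝ᵥ (P * G).mulVec v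
          + x ⬝ᵥ (P * G * R⁻¹ * Gᵀ * P).mulVec x := by
      rw [Matrix.mulVec_add, dotProduct_add, add_dotProduct, add_dotProduct,
        Matrix.mulVec_mulVec, hRS, mulVec_dot' (R⁻¹ * Gᵀ * P), Matrix.mulVec_mulVec,
        mulVec_dot' (R⁻¹ * Gᵀ * P), Matrix.mulVec_mulVec, hSR, hSS]
      ring
    rw [e1, e2, e3, e4, hAREx x]
    ring
  -- continuity facts
  have hηc : Continuous η := by
    refine continuous_iff_continuousAt.mpr fun t => (hη t).differentiableAt.continuousAt
  have hdc : Continuous fun t => F.mulVec (η t) + G.mulVec (u t) := by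
    exact ((continuous_const.matrix_mulVec hηc).add (continuous_const.matrix_mulVec hu))
  have hV'c : Continuous fun t =>
      (F.mulVec (η t) + G.mulVec (u t)) ⬝ᵥ P.mulVec (η t)
        + η t ⬝ᵥ P.mulVec (F.mulVec (η t) + G.mulVec (u t)) :=
    (hdc.dotProduct (continuous_const.matrix_mulVec hηc)).add
      (hηc.dotProduct (continuous_const.matrix_mulVec hdc))
  have hsqc : Continuous fun t =>
      (u t + (R⁻¹ * Gᵀ * P).mulVec (η t))
        ⬝ᵥ R.mulVec (u t + (R⁻¹ * Gᵀ * P).mulVec (η t)) := by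
    have h1 : Continuous fun t => u t + (R⁻¹ * Gᵀ * P).mulVec (η t) :=
      hu.add (continuous_const.matrix_mulVec hηc)
    exact h1.dotProduct (continuous_const.matrix_mulVec h1)
  intro Tf _
  -- FTC for V(t) = ηᵀPη
  have hftc : (∫ t in (0:ℝ)..Tf,
        ((F.mulVec (η t) + G.mulVec (u t)) ⬝ᵥ P.mulVec (η t)
          + η t ⬝ᵥ P.mulVec (F.mulVec (η t) + G.mulVec (u t))))
      = η Tf ⬝ᵥ P.mulVec (η Tf) - η 0 ⬝ᵥ P.mulVec (η 0) := by
    refine intervalIntegral.integral_eq_sub_of_hasDerivAt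
      (fun t _ => hd_dot' (hη t) (hd_mulVec' P (hη t)))
      (hV'c.intervalIntegrable 0 Tf)
  calc (∫ t in (0:ℝ)..Tf,
        (H.mulVec (η t) ⬝ᵥ Q.mulVec (H.mulVec (η t)) + u t ⬝ᵥ R.mulVec (u t)))
      = ∫ t in (0:ℝ)..Tf,
          (-(((F.mulVec (η t) + G.mulVec (u t)) ⬝ᵥ P.mulVec (η t)
                + η t ⬝ᵥ P.mulVec (F.mulVec (η t) + G.mulVec (u t))))
            + (u t + (R⁻¹ * Gᵀ * P).mulVec (η t))
                ⬝ᵥ R.mulVec (u t + (R⁻¹ * Gᵀ * P).mulVec (η t))) := by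
        exact intervalIntegral.integral_congr fun t _ => key t
    _ = (∫ t in (0:ℝ)..Tf,
          -(((F.mulVec (η t) + G.mulVec (u t)) ⬝ᵥ P.mulVec (η t)
                + η t ⬝ᵥ P.mulVec (F.mulVec (η t) + G.mulVec (u t)))))
        + ∫ t in (0:ℝ)..Tf,
            ((u t + (R⁻¹ * Gᵀ * P).mulVec (η t))
              ⬝ᵥ R.mulVec (u t + (R⁻¹ * Gᵀ * P).mulVec (η t))) := by
        exact intervalIntegral.integral_add (hV'c.neg.intervalIntegrable 0 Tf)
          (hsqc.intervalIntegrable 0 Tf)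
    _ = η 0 ⬝ᵥ P.mulVec (η 0) - η Tf ⬝ᵥ P.mulVec (η Tf)
        + ∫ t in (0:ℝ)..Tf,
            ((u t + (R⁻¹ * Gᵀ * P).mulVec (η t))
              ⬝ᵥ R.mulVec (u t + (R⁻¹ * Gᵀ * P).mulVec (η t))) := by
        rw [intervalIntegral.integral_neg, hftc]; ring
end

section
/- Let A ∈ ℝ^{n×n}, B ∈ ℝ^{n×m}, C ∈ ℝ^{p×n}, and let A_z ∈ ℝ^{N×N}, B_ξ ∈ ℝ^{N×m}, L_z ∈ ℝ^{N×p}, Π ∈ ℝ^{n×N} satisfy Π(A_z + L_z C Π) = AΠ and Π B_ξ = B. Suppose the matrix N₀ := A − Π L_z C is diagonalizable with n distinct real eigenvalues, N₀ = S Λ S⁻¹ with Λ = diag(λ₁, …, λₙ) and S invertible. Let u : ℝ → ℝᵐ, let x : ℝ → ℝⁿ be differentiable with x'(t) = A x(t) + B u(t), set y(t) := C x(t), let z : ℝ → ℝᴺ be differentiable with z'(t) = A_z z(t) + B_ξ u(t) + L_z y(t) and z(0) = 0, and let ε : ℝ → ℝⁿ be differentiable with ε'(t) = Λ ε(t) and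 ε(0) = 1ₙ. Then, setting Γ := S · diag(S⁻¹ x(0)), the output satisfies y(t) = C Π z(t) + C Γ ε(t) for all t ≥ 0. -/
open Matrix

/-- The augmented (filter + transverse) system reproduces the
input–output behavior of the plant: with `Π(A_z + L_z C Π) = AΠ`, `Π B_ξ = B`,
`N₀ := A − Π L_z C = S Λ S⁻¹` (Λ diagonal with distinct real entries), `z(0) = 0`,
`ε' = Λ ε`, `ε(0) = 1ₙ`, and `Γ := S · diag(S⁻¹ x(0))`, the plant output satisfies
`y(t) = C Π z(t) + C Γ ε(t)` for all `t ≥ 0`. -/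
theorem augmented_system_output
    (n m p N : ℕ)
    (A : Matrix (Fin n) (Fin n) ℝ) (B : Matrix (Fin n) (Fin m) ℝ)
    (C : Matrix (Fin p) (Fin n) ℝ)
    (Az : Matrix (Fin N) (Fin N) ℝ) (Bξ : Matrix (Fin N) (Fin m) ℝ)
    (Lz : Matrix (Fin N) (Fin p) ℝ) (Pi' : Matrix (Fin n) (Fin N) ℝ)
    (hPiA : Pi' * (Az + Lz * (C * Pi')) = A * Pi')
    (hPiB : Pi' * Bξ = B)
    (lam : Fin n → ℝ) (hdist : Function.Injective lam)
    (S : Matrix (Fin n) (Fin n) ℝ) (hS : IsUnit S.det)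
    (hdiag : A - Pi' * Lz * C = S * Matrix.diagonal lam * S⁻¹)
    (u : ℝ → Fin m → ℝ)
    (x : ℝ → Fin n → ℝ)
    (hx : ∀ t : ℝ, 0 ≤ t → HasDerivAt x (A.mulVec (x t) + B.mulVec (u t)) t)
    (z : ℝ → Fin N → ℝ)
    (hz : ∀ t : ℝ, 0 ≤ t → HasDerivAt z
      (Az.mulVec (z t) + Bξ.mulVec (u t) + Lz.mulVec (C.mulVec (x t))) t)
    (hz0 : z 0 = 0)
    (ε : ℝ → Fin n → ℝ)
    (hε : ∀ t : ℝ, 0 ≤ t →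
      HasDerivAt ε ((Matrix.diagonal lam).mulVec (ε t)) t)
    (hε0 : ε 0 = fun _ => 1) :
    ∀ t : ℝ, 0 ≤ t →
      C.mulVec (x t)
        = (C * Pi').mulVec (z t)
          + (C * (S * Matrix.diagonal (S⁻¹.mulVec (x 0)))).mulVec (ε t) := by
  set N₀ : Matrix (Fin n) (Fin n) ℝ := A - Pi' * Lz * C with hN₀
  set v : Fin n → ℝ := S⁻¹.mulVec (x 0) with hv
  set Γ : Matrix (Fin n) (Fin n) ℝ := S * Matrix.diagonal v with hΓ
  have hSinv : S⁻¹ * S = 1 := Matrix.nonsing_inv_mul S hS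
  have hSinv' : S * S⁻¹ = 1 := Matrix.mul_nonsing_inv S hS
  have key1 : N₀ * Pi' = Pi' * Az := by
    have h : Pi' * Az + Pi' * (Lz * (C * Pi')) = A * Pi' := by
      rw [← Matrix.mul_add]; exact hPiA
    rw [hN₀, Matrix.sub_mul, ← h]
    have : Pi' * Lz * C * Pi' = Pi' * (Lz * (C * Pi')) := by
      simp [Matrix.mul_assoc]
    rw [this]; abel
  have key2 : N₀ * Γ = Γ * Matrix.diagonal lam := by
    rw [hdiag, hΓ]
    have hcomm : Matrix.diagonal lam * Matrix.diagonal v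
        = Matrix.diagonal v * Matrix.diagonal lam := by
      rw [Matrix.diagonal_mul_diagonal, Matrix.diagonal_mul_diagonal]
      simp [mul_comm]
    calc S * Matrix.diagonal lam * S⁻¹ * (S * Matrix.diagonal v)
        = S * Matrix.diagonal lam * (S⁻¹ * S) * Matrix.diagonal v := by
          simp only [Matrix.mul_assoc]
      _ = S * (Matrix.diagonal lam * Matrix.diagonal v) := by
          rw [hSinv]; simp [Matrix.mul_assoc]
      _ = S * Matrix.diagonal v * Matrix.diagonal lam := by
          rw [hcomm, Matrix.mul_assoc]
  set f : ℝ → Fin n → ℝ := fun t => x t - Pi'.mulVec (z t) with hf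
  set g : ℝ → Fin n → ℝ := fun t => Γ.mulVec (ε t) with hg
  have h0 : f 0 = g 0 := by
    show x 0 - Pi'.mulVec (z 0) = Γ.mulVec (ε 0)
    rw [hz0, hε0]
    simp only [Matrix.mulVec_zero, sub_zero, hΓ]
    rw [← Matrix.mulVec_mulVec]
    have hdv : (Matrix.diagonal v).mulVec (fun _ => (1:ℝ)) = v := by
      funext i; simp [Matrix.mulVec_diagonal]
    rw [hdv, hv, Matrix.mulVec_mulVec, hSinv', Matrix.one_mulVec]
  have hf' : ∀ t : ℝ, 0 ≤ t → HasDerivAt f (N₀.mulVec (f t)) t := by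
    intro t ht
    have hd : HasDerivAt f
        (A.mulVec (x t) + B.mulVec (u t)
          - Pi'.mulVec (Az.mulVec (z t) + Bξ.mulVec (u t) + Lz.mulVec (C.mulVec (x t)))) t := by
      have := (hx t ht).sub
        ((Pi'.mulVecLin.toContinuousLinearMap.hasFDerivAt).comp_hasDerivAt t (hz t ht))
      exact this
    have hder : N₀.mulVec (f t)
        = A.mulVec (x t) + B.mulVec (u t)
          - Pi'.mulVec (Az.mulVec (z t) + Bξ.mulVec (u t) + Lz.mulVec (C.mulVec (x t))) := by
      have lhs : N₀.mulVec (f t)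
          = A.mulVec (x t) - (Pi' * Lz * C).mulVec (x t) - (Pi' * Az).mulVec (z t) := by
        show N₀.mulVec (x t - Pi'.mulVec (z t)) = _
        rw [Matrix.mulVec_sub, Matrix.mulVec_mulVec, key1]
        rw [hN₀, Matrix.sub_mulVec]
      have rhs : Pi'.mulVec (Az.mulVec (z t) + Bξ.mulVec (u t) + Lz.mulVec (C.mulVec (x t)))
          = (Pi' * Az).mulVec (z t) + B.mulVec (u t) + (Pi' * Lz * C).mulVec (x t) := by
        rw [Matrix.mulVec_add, Matrix.mulVec_add, Matrix.mulVec_mulVec,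
          Matrix.mulVec_mulVec, Matrix.mulVec_mulVec, Matrix.mulVec_mulVec, hPiB]
      rw [lhs, rhs]; abel
    rw [hder]; exact hd
  have hg' : ∀ t : ℝ, 0 ≤ t → HasDerivAt g (N₀.mulVec (g t)) t := by
    intro t ht
    have hd := (Γ.mulVecLin.toContinuousLinearMap.hasFDerivAt).comp_hasDerivAt t (hε t ht)
    have hder : N₀.mulVec (g t) = Γ.mulVec ((Matrix.diagonal lam).mulVec (ε t)) := by
      show N₀.mulVec (Γ.mulVec (ε t)) = _
      rw [Matrix.mulVec_mulVec, key2, ← Matrix.mulVec_mulVec]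
    rw [hder]
    exact hd
  have main : ∀ t : ℝ, 0 ≤ t → f t = g t := by
    intro t ht
    set φ := N₀.mulVecLin.toContinuousLinearMap with hφ
    have heq : Set.EqOn f g (Set.Icc 0 t) := by
      apply ODE_solution_unique (v := fun _ w => N₀.mulVec w) (K := ‖φ‖₊)
      · intro _
        have := φ.lipschitz
        exact this
      · exact fun s hs => ((hf' s hs.1).continuousAt).continuousWithinAt
      · exact fun s hs => (hf' s hs.1).hasDerivWithinAt
      · exact fun s hs => ((hg' s hs.1).continuousAt).continuousWithinAt
      · exact fun s hs => (hg' s hs.1).hasDerivWithinAt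
      · exact h0
    exact heq ⟨ht, le_refl t⟩
  intro t ht
  have hft : x t - Pi'.mulVec (z t) = Γ.mulVec (ε t) := main t ht
  have hx_eq : x t = Pi'.mulVec (z t) + Γ.mulVec (ε t) := by
    have := sub_eq_iff_eq_add.mp hft
    rw [this, add_comm]
  rw [hx_eq, Matrix.mulVec_add, Matrix.mulVec_mulVec, Matrix.mulVec_mulVec]
end
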